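/- arXiv:1608.05268 — 2 statements merged into one kernel-verified Lean document; each statement's English description precedes it below -/
import Mathlib

section
/- For all x, y ∈ ℝ³ with x ≠ y, one has 1/|x-y| = (4/π²) ∫₀^∞ r⁻⁵ ( ∫_{ℝ³} exp(-|x-z|²/r²) · exp(-|y-z|²/r²) dz ) dr. -/
/-!
By Apollonius' identity the product of the two Gaussians is a Gaussian of half the width centred
at the midpoint of `x` and `y`, times `exp (-|x - y|² / (2r²))`; so the `z`-integral is
`exp (-|x - y|² / (2r²)) (π r² / 2)^{3/2}`. After that, `u = 1/r` turns the `r`-integral into the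
half-line Gaussian integral `∫₀^∞ exp (-|x - y|² u² / 2) du = √(2π) / (2|x - y|)`.
-/

open MeasureTheory Real Set

theorem norm_sub_sq_add_norm_sub_sq_eq_midpoint {V : Type*} [NormedAddCommGroup V]
    [InnerProductSpace ℝ V] (x y z : V) :
    ‖x - z‖ ^ 2 + ‖y - z‖ ^ 2 = 2 * ‖z - midpoint ℝ x y‖ ^ 2 + ‖x - y‖ ^ 2 / 2 := by
  have apollonius :=
    EuclideanGeometry.dist_sq_add_dist_sq_eq_two_mul_dist_midpoint_sq_add_half_dist_sq z x y
  simp only [dist_eq_norm] at apollonius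
  rw [norm_sub_rev x z, norm_sub_rev y z, apollonius]
  ring

theorem integral_exp_neg_norm_sub_sq_div_sq_mul {V : Type*} [NormedAddCommGroup V]
    [InnerProductSpace ℝ V] [FiniteDimensional ℝ V] [MeasurableSpace V] [BorelSpace V]
    (x y : V) {r : ℝ} (hr : 0 < r) :
    ∫ z : V, exp (-‖x - z‖ ^ 2 / r ^ 2) * exp (-‖y - z‖ ^ 2 / r ^ 2) =
      exp (-(‖x - y‖ ^ 2 / 2) / r ^ 2) * (√(π / 2) * r) ^ Module.finrank ℝ V := by
  have hsplit : ∀ z : V, exp (-‖x - z‖ ^ 2 / r ^ 2) * exp (-‖y - z‖ ^ 2 / r ^ 2) =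
      exp (-(2 / r ^ 2) * ‖z - midpoint ℝ x y‖ ^ 2) * exp (-(‖x - y‖ ^ 2 / 2) / r ^ 2) := by
    intro z
    rw [← exp_add, ← exp_add, neg_div, neg_div, ← neg_add, ← add_div,
      norm_sub_sq_add_norm_sub_sq_eq_midpoint]
    congr 1
    ring
  simp_rw [hsplit]
  rw [integral_mul_const, integral_sub_right_eq_self (fun z : V ↦ exp (-(2 / r ^ 2) * ‖z‖ ^ 2)),
    GaussianFourier.integral_rexp_neg_mul_sq_norm (by positivity), rpow_div_two_eq_sqrt _
    (by positivity), rpow_natCast, div_div_eq_mul_div, mul_div_right_comm,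
    sqrt_mul (by positivity), sqrt_sq hr.le, mul_comm]

theorem integral_Ioi_exp_neg_div_sq_div_sq (b : ℝ) :
    ∫ r in Ioi (0 : ℝ), exp (-b / r ^ 2) / r ^ 2 = √(π / b) / 2 := by
  rw [← integral_gaussian_Ioi,
    ← integral_comp_rpow_Ioi (fun u ↦ exp (-b * u ^ 2)) (by norm_num : (-1 : ℝ) ≠ 0)]
  refine setIntegral_congr_fun measurableSet_Ioi fun r (hr : 0 < r) ↦ ?_
  rw [show (-1 : ℝ) - 1 = -(2 : ℕ) by norm_num, rpow_neg hr.le, rpow_natCast, rpow_neg_one]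
  simp only [smul_eq_mul, abs_neg, abs_one, inv_pow]
  ring_nf

/-- Smooth Fefferman–de la Llave representation of the Coulomb potential:
for `x ≠ y` in `ℝ³`,
`1/|x-y| = (4/π²) ∫₀^∞ r⁻⁵ (∫ exp(-|x-z|²/r²) exp(-|y-z|²/r²) dz) dr`. -/
theorem fefferman_de_la_llave
    (x y : EuclideanSpace ℝ (Fin 3)) (hxy : x ≠ y) :
    1 / ‖x - y‖ =
      (4 / Real.pi ^ 2) *
        ∫ r in Ioi (0 : ℝ),
          (1 / r ^ 5) *
            ∫ z : EuclideanSpace ℝ (Fin 3),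
              Real.exp (-‖x - z‖ ^ 2 / r ^ 2) * Real.exp (-‖y - z‖ ^ 2 / r ^ 2) := by
  have hd : 0 < ‖x - y‖ := norm_pos_iff.mpr (sub_ne_zero.mpr hxy)
  have hs : √(π / 2) ^ 2 = π / 2 := sq_sqrt (by positivity)
  have hradial : ∀ r ∈ Ioi (0 : ℝ), (1 / r ^ 5) * ∫ z : EuclideanSpace ℝ (Fin 3),
      exp (-‖x - z‖ ^ 2 / r ^ 2) * exp (-‖y - z‖ ^ 2 / r ^ 2) =
        √(π / 2) ^ 3 * (exp (-(‖x - y‖ ^ 2 / 2) / r ^ 2) / r ^ 2) := fun r (hr : 0 < r) ↦ by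
    rw [integral_exp_neg_norm_sub_sq_div_sq_mul x y hr, finrank_euclideanSpace_fin]
    field_simp
  have hsqrt : √(π / (‖x - y‖ ^ 2 / 2)) = 2 * √(π / 2) / ‖x - y‖ := by
    rw [← sqrt_sq (by positivity : 0 ≤ 2 * √(π / 2) / ‖x - y‖), div_pow, mul_pow, hs]
    field_simp
  rw [setIntegral_congr_fun measurableSet_Ioi hradial, integral_const_mul,
    integral_Ioi_exp_neg_div_sq_div_sq, hsqrt]
  field_simp
  linear_combination (-4 * (√(π / 2) ^ 2 + π / 2)) * hs
end

section
/- Let ω be a bounded operator on L²(ℝ³) with integral kernel ω(x;y), let z ∈ ℝ³ and r > 0, and let χ(x) = exp(-|x-z|²/r²). Then the commutator admits the representation [χ, ω] = -∑_{i=1}^3 ∫₀¹ χ_{r/√s,z} ( ((x-z)_i/r²)[x_i, ω] + [x_i, ω]((x-z)_i/r²) ) χ_{r/√(1-s),z} ds, where χ_{ρ,z}(x) = exp(-|x-z|²/ρ²) acts by multiplication and [x_i, ω] is the commutator with the i-th coordinate multiplication operator. -/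
/-! Differentiating `s ↦ exp (s α + (1 - s) β)` gives
`exp α - exp β = (α - β) ∫₀¹ exp (s α + (1 - s) β) ds`. For the Gaussians `α = -|x-z|²/r²`,
`β = -|y-z|²/r²` the weight splits as `χ_{r/√s,z}(x) χ_{r/√(1-s),z}(y)`, and
`|x-z|² - |y-z|² = ∑ᵢ ((x-z)ᵢ + (y-z)ᵢ)(xᵢ - yᵢ)` distributes the prefactor `α - β` over the
coordinate commutators `[xᵢ, ω]`. -/

open MeasureTheory Real Set

noncomputable section

abbrev E3 := EuclideanSpace ℝ (Fin 3)

theorem Real.exp_sub_exp_eq_mul_integral (a b : ℝ) :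
    exp a - exp b = (a - b) * ∫ s in Ioo (0 : ℝ) 1, exp (s * a + (1 - s) * b) := by
  have hderiv : ∀ s ∈ uIcc (0 : ℝ) 1, HasDerivAt (fun s => exp (s * a + (1 - s) * b))
      ((a - b) * exp (s * a + (1 - s) * b)) s := fun s _ => by
    convert (((hasDerivAt_id s).mul_const (a - b)).add_const b).exp using 1
    · ext t; simp only [id]; ring_nf
    · simp only [id]; ring_nf
  rw [← integral_const_mul, ← integral_Ioc_eq_integral_Ioo,
    ← intervalIntegral.integral_of_le zero_le_one,
    intervalIntegral.integral_eq_sub_of_hasDerivAt hderiv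
      (Continuous.intervalIntegrable (by fun_prop) 0 1)]
  norm_num

theorem EuclideanSpace.norm_sq_sub_norm_sq {ι : Type*} [Fintype ι] (u v : EuclideanSpace ℝ ι) :
    ‖u‖ ^ 2 - ‖v‖ ^ 2 = ∑ i, (u i + v i) * (u i - v i) := by
  simp only [EuclideanSpace.real_norm_sq_eq, ← Finset.sum_sub_distrib]
  exact Finset.sum_congr rfl fun i _ => by ring

theorem commutator_gaussian_kernel_representation_general
    (k : E3 → E3 → ℂ) (z : E3) (r : ℝ) (x y : E3) :
    ((Real.exp (-‖x - z‖ ^ 2 / r ^ 2) - Real.exp (-‖y - z‖ ^ 2 / r ^ 2) : ℝ) : ℂ) * k x y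
      = -∑ i : Fin 3,
          ∫ s in Ioo (0 : ℝ) 1,
            ((Real.exp (-s * ‖x - z‖ ^ 2 / r ^ 2) : ℝ) : ℂ) *
              ( (((x - z) i / r ^ 2 : ℝ) : ℂ) * (((x i - y i : ℝ) : ℂ) * k x y)
                + (((x i - y i : ℝ) : ℂ) * k x y) * (((y - z) i / r ^ 2 : ℝ) : ℂ) ) *
            ((Real.exp (-(1 - s) * ‖y - z‖ ^ 2 / r ^ 2) : ℝ) : ℂ) := by
  have hexponent : -‖x - z‖ ^ 2 / r ^ 2 - -‖y - z‖ ^ 2 / r ^ 2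
      = -∑ i, ((x - z) i + (y - z) i) * (x i - y i) / r ^ 2 := by
    rw [show -‖x - z‖ ^ 2 / r ^ 2 - -‖y - z‖ ^ 2 / r ^ 2
      = -((‖x - z‖ ^ 2 - ‖y - z‖ ^ 2) / r ^ 2) by ring,
      EuclideanSpace.norm_sq_sub_norm_sq, Finset.sum_div]
    simp only [PiLp.sub_apply, sub_sub_sub_cancel_right]
  have hintegral (c : ℂ) : ∫ s in Ioo (0 : ℝ) 1,
        ((exp (-s * ‖x - z‖ ^ 2 / r ^ 2) : ℝ) : ℂ) * c *
          ((exp (-(1 - s) * ‖y - z‖ ^ 2 / r ^ 2) : ℝ) : ℂ)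
      = c * ((∫ s in Ioo (0 : ℝ) 1,
          exp (s * (-‖x - z‖ ^ 2 / r ^ 2) + (1 - s) * (-‖y - z‖ ^ 2 / r ^ 2)) : ℝ) : ℂ) := by
    rw [← integral_complex_ofReal, ← integral_const_mul]
    congr 1 with s
    rw [show s * (-‖x - z‖ ^ 2 / r ^ 2) + (1 - s) * (-‖y - z‖ ^ 2 / r ^ 2)
      = -s * ‖x - z‖ ^ 2 / r ^ 2 + -(1 - s) * ‖y - z‖ ^ 2 / r ^ 2 by ring, exp_add]
    push_cast; ring
  simp only [hintegral]
  rw [exp_sub_exp_eq_mul_integral, hexponent]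
  push_cast
  simp only [neg_mul, Finset.sum_mul]
  congr 1
  exact Finset.sum_congr rfl fun i _ => by ring

/-- Duhamel-type representation of the commutator `[χ_{(r,z)}, ω]` at the level of
integral kernels: if `ω` has kernel `k(x;y)` and `χ_{ρ,z}(x) = exp(-|x-z|²/ρ²)`, then the
kernel `(χ_{r,z}(x) - χ_{r,z}(y)) k(x;y)` of `[χ_{(r,z)}, ω]` equals
`-∑_{i=1}^3 ∫₀¹ χ_{r/√s,z}(x) ( ((x-z)_i/r²)·[x_i,ω](x;y) + [x_i,ω](x;y)·((y-z)_i/r²) )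
χ_{r/√(1-s),z}(y) ds`, where `[x_i, ω]` has kernel `(x_i - y_i) k(x;y)`.
(Note `χ_{r/√s,z}(x) = exp(-s|x-z|²/r²)`.) -/
theorem commutator_gaussian_kernel_representation
    (k : E3 → E3 → ℂ) (z : E3) (r : ℝ) (hr : 0 < r) (x y : E3) :
    ((Real.exp (-‖x - z‖ ^ 2 / r ^ 2) - Real.exp (-‖y - z‖ ^ 2 / r ^ 2) : ℝ) : ℂ) * k x y
      = -∑ i : Fin 3,
          ∫ s in Ioo (0 : ℝ) 1,
            ((Real.exp (-s * ‖x - z‖ ^ 2 / r ^ 2) : ℝ) : ℂ) *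
              ( (((x - z) i / r ^ 2 : ℝ) : ℂ) * (((x i - y i : ℝ) : ℂ) * k x y)
                + (((x i - y i : ℝ) : ℂ) * k x y) * (((y - z) i / r ^ 2 : ℝ) : ℂ) ) *
            ((Real.exp (-(1 - s) * ‖y - z‖ ^ 2 / r ^ 2) : ℝ) : ℂ) :=
  commutator_gaussian_kernel_representation_general k z r x y
end
end
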